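/- Fragility of isolated solutions under perturbation (Corollary 3.2): Fix κ ∈ ℝ, α > 0, a sequence of integers M_N with M_N/N → α, a sequence of integers k_N ≥ 1, and noise levels η_N ∈ (0,1) with η_N → 0 and η_N·N/log N → ∞ as N → ∞. Let G be a random N×M_N disorder matrix with i.i.d. standard Gaussian N(0,1) entries, G' an independent copy, and G̃ := √(1−η_N)·G + √(η_N)·G'. Then for every ε > 0, the probability (over G) of the event { for every k_N-isolated solution σ ∈ S_{k_N}°(G,κ) and every τ ∈ B_{k_N,H}(σ), the conditional probability P[τ ∈ S(G̃,κ) | G] is at most 1/2 + ε } tends to 1 as N → ∞. -/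

import Mathlib

open MeasureTheory ProbabilityTheory Filter Finset
open scoped NNReal ENNReal

noncomputable section

/-- The Boolean cube `{-1,1}^N` inside `ℝ^N`. -/
def cube (N : ℕ) : Set (Fin N → ℝ) := {σ | ∀ i, σ i = 1 ∨ σ i = -1}

/-- Hamming distance `d_H(σ,τ) = (1/2)·Σ |σ_i − τ_i|`. -/
def dH {N : ℕ} (σ τ : Fin N → ℝ) : ℝ := (1 / 2) * ∑ i, |σ i - τ i|

/-- Hamming ball of radius `k` around `σ`, inside the cube. -/
def hammingBall {N : ℕ} (k : ℕ) (σ : Fin N → ℝ) : Set (Fin N → ℝ) :=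
  {τ | τ ∈ cube N ∧ dH σ τ ≤ k}

/-- Solution set `S(G,κ)` of the asymmetric binary perceptron. -/
def solSet {N M : ℕ} (G : Fin M → Fin N → ℝ) (κ : ℝ) : Set (Fin N → ℝ) :=
  {σ | σ ∈ cube N ∧ ∀ a : Fin M, κ * Real.sqrt N ≤ ∑ i, G a i * σ i}

/-- The set `S_k°(G,κ)` of `k`-isolated solutions. -/
def isoSet {N M : ℕ} (G : Fin M → Fin N → ℝ) (κ : ℝ) (k : ℕ) : Set (Fin N → ℝ) :=
  {σ | σ ∈ solSet G κ ∧ solSet G κ ∩ hammingBall k σ = {σ}}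

/-- Law of a random matrix (indexed as `Fin M → Fin N → ℝ`) with i.i.d. standard
Gaussian entries. -/
def gaussMat (N M : ℕ) : Measure (Fin M → Fin N → ℝ) :=
  Measure.pi fun _ => Measure.pi fun _ => gaussianReal 0 1

instance (N M : ℕ) : IsProbabilityMeasure (gaussMat N M) := by
  unfold gaussMat; infer_instance

/-- The correlated perturbation `√(1-η)·g + √η·g'`. -/
def tilde {N M : ℕ} (η : ℝ) (g g' : Fin M → Fin N → ℝ) : Fin M → Fin N → ℝ :=
  fun a i => Real.sqrt (1 - η) * g a i + Real.sqrt η * g' a i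


open Real

lemma gauss_conv_pdf (v₁ v₂ : ℝ≥0) (h₁ : v₁ ≠ 0) (h₂ : v₂ ≠ 0) (z : ℝ) :
    ∫ x, gaussianPDFReal 0 v₁ x * gaussianPDFReal 0 v₂ (z - x)
      = gaussianPDFReal 0 (v₁ + v₂) z := by
  have ha : (0:ℝ) < v₁ := by positivity
  have hb : (0:ℝ) < v₂ := by exact_mod_cast pos_iff_ne_zero.mpr h₂
  set a := (v₁:ℝ) with hav
  set b := (v₂:ℝ) with hbv
  set B : ℝ := (a+b)/(2*a*b) with hB
  have hBpos : 0 < B := by positivity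
  set D : ℝ := a*z/(a+b) with hD
  set C : ℝ := (√(2*π*a))⁻¹ * (√(2*π*b))⁻¹ * rexp (-z^2/(2*(a+b))) with hC
  have hpt : ∀ x, gaussianPDFReal 0 v₁ x * gaussianPDFReal 0 v₂ (z - x)
      = C * rexp (-B*(x-D)^2) := by
    intro x
    simp only [gaussianPDFReal, sub_zero, hC]
    rw [mul_mul_mul_comm, mul_assoc ((√(2*π*a))⁻¹ * (√(2*π*b))⁻¹), ← Real.exp_add,
      ← Real.exp_add, ← hav, ← hbv]
    congr 2
    rw [hB, hD]
    field_simp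
    ring
  have hint : ∫ x, gaussianPDFReal 0 v₁ x * gaussianPDFReal 0 v₂ (z - x)
      = C * √(π / B) := by
    rw [integral_congr_ae (Eventually.of_forall hpt), integral_const_mul]
    have : ∀ x : ℝ, rexp (-B*(x-D)^2) = (fun y => rexp (-B * y^2)) (x - D) := fun x => rfl
    rw [integral_congr_ae (Eventually.of_forall this),
      integral_sub_right_eq_self (fun y => rexp (-B * y^2)) D, integral_gaussian]
  rw [hint]
  simp only [gaussianPDFReal, sub_zero]
  have hcoe : ((v₁ + v₂ : ℝ≥0) : ℝ) = a + b := by push_cast; ring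
  rw [hcoe, hC]
  have key : √(2*π*a) * √(2*π*b) = √(2*π*(a+b)) * √(π/B) := by
    rw [← Real.sqrt_mul (by positivity), ← Real.sqrt_mul (by positivity)]
    congr 1
    rw [hB]
    field_simp
  have h1 : (0:ℝ) < √(2*π*a) := Real.sqrt_pos.mpr (by positivity)
  have h2 : (0:ℝ) < √(2*π*b) := Real.sqrt_pos.mpr (by positivity)
  have h3 : (0:ℝ) < √(2*π*(a+b)) := Real.sqrt_pos.mpr (by positivity)
  have h4 : (0:ℝ) < √(π/B) := Real.sqrt_pos.mpr (by positivity)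
  have hconst : (√(2*π*a))⁻¹ * (√(2*π*b))⁻¹ * √(π/B) = (√(2*π*(a+b)))⁻¹ := by
    rw [← mul_inv]
    rw [key]
    field_simp
  calc (√(2*π*a))⁻¹ * (√(2*π*b))⁻¹ * rexp (-z^2/(2*(a+b))) * √(π/B)
      = ((√(2*π*a))⁻¹ * (√(2*π*b))⁻¹ * √(π/B)) * rexp (-z^2/(2*(a+b))) := by ring
    _ = (√(2*π*(a+b)))⁻¹ * rexp (-z^2/(2*(a+b))) := by rw [hconst]


lemma gaussianPDFReal_le_sup (v : ℝ≥0) (μ x : ℝ) : gaussianPDFReal μ v x ≤ (√(2*π*v))⁻¹ := by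
  rw [gaussianPDFReal]
  refine mul_le_of_le_one_right (by positivity) (Real.exp_le_one_iff.2 ?_)
  apply div_nonpos_of_nonpos_of_nonneg
  · simpa using sq_nonneg (x - μ)
  · positivity

lemma gauss_conv (v₁ v₂ : ℝ≥0) (h₁ : v₁ ≠ 0) (h₂ : v₂ ≠ 0) :
    ((gaussianReal 0 v₁).prod (gaussianReal 0 v₂)).map (fun p : ℝ × ℝ => p.1 + p.2)
      = gaussianReal 0 (v₁ + v₂) := by
  have h12 : v₁ + v₂ ≠ 0 := fun h => h₁ (by simpa using (add_eq_zero.mp h).1)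
  ext s hs
  have hadd : Measurable (fun p : ℝ × ℝ => p.1 + p.2) := measurable_fst.add measurable_snd
  rw [Measure.map_apply hadd hs, Measure.prod_apply (hadd hs)]
  have hstep1 : ∀ x : ℝ, gaussianReal 0 v₂ (Prod.mk x ⁻¹' ((fun p : ℝ×ℝ => p.1 + p.2) ⁻¹' s))
      = ∫⁻ y, s.indicator (fun y' => gaussianPDF 0 v₂ (y' - x)) y := by
    intro x
    have : (Prod.mk x ⁻¹' ((fun p : ℝ×ℝ => p.1 + p.2) ⁻¹' s)) = (x + ·) ⁻¹' s := rfl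
    rw [this, ← Measure.map_apply (measurable_const_add x) hs, gaussianReal_map_const_add,
      zero_add, gaussianReal_apply _ h₂, ← lintegral_indicator hs _]
    congr 1
    funext y
    have hpdf : gaussianPDF x v₂ = fun y => gaussianPDF 0 v₂ (y - x) := by
      funext y
      rw [gaussianPDF, gaussianPDF, gaussianPDFReal_sub, zero_add]
    rw [hpdf]
  simp_rw [hstep1]
  rw [gaussianReal_of_var_ne_zero _ h₁]
  have hind : ∀ (x y : ℝ), s.indicator (fun y' => gaussianPDF 0 v₂ (y' - x)) y
      = {q : ℝ×ℝ | q.2 ∈ s}.indicator (fun q => gaussianPDF 0 v₂ (q.2 - q.1)) (x, y) := by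
    intro x y
    by_cases hy : y ∈ s <;> simp [Set.indicator, hy]
  have hmeas_ind : Measurable fun q : ℝ×ℝ =>
      {q : ℝ×ℝ | q.2 ∈ s}.indicator (fun q => gaussianPDF 0 v₂ (q.2 - q.1)) q := by
    refine Measurable.indicator ?_ (measurable_snd hs)
    exact (measurable_gaussianPDF 0 v₂).comp (measurable_snd.sub measurable_fst)
  have hFmeas : Measurable fun x => ∫⁻ y, s.indicator (fun y' => gaussianPDF 0 v₂ (y' - x)) y := by
    simp_rw [hind]
    exact Measurable.lintegral_prod_right hmeas_ind
  rw [lintegral_withDensity_eq_lintegral_mul _ (measurable_gaussianPDF 0 v₁) hFmeas]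
  simp only [Pi.mul_apply]
  have hpull : ∀ x : ℝ, gaussianPDF 0 v₁ x
        * ∫⁻ y, s.indicator (fun y' => gaussianPDF 0 v₂ (y' - x)) y
      = ∫⁻ y, gaussianPDF 0 v₁ x * s.indicator (fun y' => gaussianPDF 0 v₂ (y' - x)) y := by
    intro x
    rw [lintegral_const_mul]
    exact (measurable_gaussianPDF 0 v₂).comp (measurable_id.sub measurable_const) |>.indicator hs
  simp_rw [hpull]
  have hunc : Measurable (Function.uncurry fun x y =>
      gaussianPDF 0 v₁ x * s.indicator (fun y' => gaussianPDF 0 v₂ (y' - x)) y) := by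
    have : (Function.uncurry fun x y =>
        gaussianPDF 0 v₁ x * s.indicator (fun y' => gaussianPDF 0 v₂ (y' - x)) y)
        = fun q : ℝ×ℝ => gaussianPDF 0 v₁ q.1
          * {q : ℝ×ℝ | q.2 ∈ s}.indicator (fun q => gaussianPDF 0 v₂ (q.2 - q.1)) q := by
      funext q
      simp only [Function.uncurry]
      rw [hind]
    rw [this]
    exact ((measurable_gaussianPDF 0 v₁).comp measurable_fst).mul hmeas_ind
  rw [lintegral_lintegral_swap hunc.aemeasurable]
  have hinner : ∀ y : ℝ, (∫⁻ x, gaussianPDF 0 v₁ x * s.indicator (fun y' => gaussianPDF 0 v₂ (y' - x)) y)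
      = s.indicator (gaussianPDF 0 (v₁ + v₂)) y := by
    intro y
    by_cases hy : y ∈ s
    · simp only [Set.indicator_of_mem hy]
      have hrw : ∀ x : ℝ, gaussianPDF 0 v₁ x * gaussianPDF 0 v₂ (y - x)
          = ENNReal.ofReal (gaussianPDFReal 0 v₁ x * gaussianPDFReal 0 v₂ (y - x)) := by
        intro x
        rw [gaussianPDF, gaussianPDF, ← ENNReal.ofReal_mul (gaussianPDFReal_nonneg _ _ _)]
      simp_rw [hrw]
      have hintg : Integrable (fun x => gaussianPDFReal 0 v₁ x * gaussianPDFReal 0 v₂ (y - x)) := by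
        refine Integrable.mono' ((integrable_gaussianPDFReal 0 v₁).mul_const (√(2*π*v₂))⁻¹) ?_ ?_
        · exact ((measurable_gaussianPDFReal 0 v₁).mul
            ((measurable_gaussianPDFReal 0 v₂).comp (measurable_const.sub measurable_id))).aestronglyMeasurable
        · refine Eventually.of_forall fun x => ?_
          rw [Real.norm_eq_abs, abs_of_nonneg (mul_nonneg (gaussianPDFReal_nonneg _ _ _) (gaussianPDFReal_nonneg _ _ _))]
          exact mul_le_mul_of_nonneg_left (gaussianPDFReal_le_sup _ _ _) (gaussianPDFReal_nonneg _ _ _)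
      rw [← ofReal_integral_eq_lintegral_ofReal hintg (Eventually.of_forall fun x =>
        mul_nonneg (gaussianPDFReal_nonneg _ _ _) (gaussianPDFReal_nonneg _ _ _)),
        gauss_conv_pdf v₁ v₂ h₁ h₂ y]
      rfl
    · simp [Set.indicator_of_notMem hy]
  simp_rw [hinner]
  rw [lintegral_indicator hs, gaussianReal_apply _ h12]

lemma map_eval_pi' {ι : Type*} [Fintype ι] [DecidableEq ι] {α : ι → Type*} [∀ i, MeasurableSpace (α i)]
    (μ : ∀ i, Measure (α i)) [∀ i, IsProbabilityMeasure (μ i)] (i : ι) :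
    (Measure.pi μ).map (fun x => x i) = μ i := by
  ext s hs
  rw [Measure.map_apply (measurable_pi_apply i) hs]
  have hset : (fun x : ∀ j, α j => x i) ⁻¹' s
      = Set.pi Set.univ (Function.update (fun j => (Set.univ : Set (α j))) i s) := by
    ext x
    simp only [Set.mem_preimage, Set.mem_pi, Set.mem_univ, true_implies]
    constructor
    · intro hx j
      by_cases hj : j = i
      · subst hj; rwa [Function.update_self]
      · rw [Function.update_of_ne hj]; trivial
    · intro hx
      have := hx i
      rwa [Function.update_self] at this
  rw [hset, Measure.pi_pi]
  rw [Fintype.prod_eq_single i (fun j hj => by rw [Function.update_of_ne hj]; exact measure_univ)]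
  rw [Function.update_self]

lemma pi_map_flip (N : ℕ) (τ : Fin N → ℝ) (hτ : ∀ i, τ i = 1 ∨ τ i = -1) :
    (Measure.pi fun _ : Fin N => gaussianReal 0 1).map (fun x i => τ i * x i)
      = Measure.pi fun _ : Fin N => gaussianReal 0 1 := by
  have hm : Measurable (fun x : Fin N → ℝ => fun i => τ i * x i) :=
    by fun_prop
  refine (Measure.pi_eq fun s hs => ?_).symm
  rw [Measure.map_apply hm (MeasurableSet.univ_pi hs)]
  have hset : (fun x : Fin N → ℝ => fun i => τ i * x i) ⁻¹' Set.pi Set.univ s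
      = Set.pi Set.univ (fun i => (τ i * ·) ⁻¹' s i) := by
    ext x
    simp [Set.mem_pi]
  rw [hset, Measure.pi_pi]
  refine Finset.prod_congr rfl fun i _ => ?_
  rw [← Measure.map_apply (measurable_const_mul (τ i)) (hs i), gaussianReal_map_const_mul]
  have h2 : (⟨(τ i)^2, sq_nonneg _⟩ : ℝ≥0) * 1 = 1 := by
    have : (τ i)^2 = 1 := by rcases hτ i with h | h <;> rw [h] <;> norm_num
    ext
    simp [this]
  rw [mul_zero, show NNReal.mk ((τ i)^2) (sq_nonneg _) * 1 = 1 from h2]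

lemma map_sum_pi : ∀ N : ℕ, 1 ≤ N →
    (Measure.pi fun _ : Fin N => gaussianReal 0 1).map (fun x => ∑ i, x i)
      = gaussianReal 0 (N : ℝ≥0) := by
  refine Nat.le_induction ?_ ?_
  · have : (fun x : Fin 1 → ℝ => ∑ i, x i) = fun x => x 0 := by
      funext x; exact Fin.sum_univ_one x
    rw [this, map_eval_pi']
    norm_num
  · intro N hN IH
    have hsum : Measurable (fun x : Fin (N+1) → ℝ => ∑ i, x i) := by measurability
    have hmp := measurePreserving_piFinSuccAbove (fun _ : Fin (N+1) => gaussianReal 0 1) 0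
    set e := MeasurableEquiv.piFinSuccAbove (fun _ : Fin (N+1) => ℝ) 0 with he
    have hpi : (Measure.pi fun _ : Fin (N+1) => gaussianReal 0 1)
        = ((gaussianReal 0 1).prod (Measure.pi fun _ : Fin N => gaussianReal 0 1)).map e.symm :=
      (hmp.symm e).map_eq.symm
    rw [hpi, Measure.map_map hsum e.symm.measurable]
    have hcomp : ((fun x : Fin (N+1) → ℝ => ∑ i, x i) ∘ e.symm)
        = (fun p : ℝ × ℝ => p.1 + p.2) ∘ (Prod.map id (fun y : Fin N → ℝ => ∑ j, y j)) := by
      funext p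
      simp only [Function.comp_apply, he, MeasurableEquiv.piFinSuccAbove_symm_apply,
        Prod.map_apply, id_eq]
      rw [Fin.insertNthEquiv_zero]
      rw [show (Fin.consEquiv fun _ : Fin (N+1) => ℝ) p = Fin.cons p.1 p.2 from rfl,
        Fin.sum_univ_succ]
      simp
    rw [hcomp, ← Measure.map_map (show Measurable (fun p : ℝ × ℝ => p.1 + p.2) from measurable_fst.add measurable_snd)
      (measurable_id.prodMap (by measurability)),
      ← Measure.map_prod_map _ _ measurable_id (by measurability : Measurable (fun y : Fin N → ℝ => ∑ j, y j)),
      Measure.map_id, IH, gauss_conv 1 (N : ℝ≥0) one_ne_zero (by exact_mod_cast Nat.one_le_iff_ne_zero.mp hN)]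
    congr 1
    push_cast
    ring

lemma gauss_Ici_half (v : ℝ≥0) (hv : v ≠ 0) : gaussianReal 0 v (Set.Ici 0) = 2⁻¹ := by
  set μ := gaussianReal 0 v with hμ
  have hmapneg : μ.map (fun x => -x) = μ := by
    rw [hμ, show (fun x : ℝ => -x) = ((-1 : ℝ) * ·) by funext x; rw [neg_one_mul],
      gaussianReal_map_const_mul]
    norm_num
  have hIoi : μ (Set.Ioi 0) = μ (Set.Iio 0) := by
    conv_lhs => rw [← hmapneg]
    rw [Measure.map_apply measurable_neg measurableSet_Ioi]
    congr 1
    ext x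
    simp
  have h0 : μ {0} = 0 := gaussianReal_absolutelyContinuous 0 hv (measure_singleton 0)
  have hIci : μ (Set.Ici 0) = μ (Set.Ioi 0) := by
    rw [← Set.Ioi_union_left, measure_union ?_ (measurableSet_singleton 0), h0, add_zero]
    simp
  have huniv : μ (Set.Iio 0) + μ (Set.Ici 0) = 1 := by
    rw [← measure_union (by simp [Set.disjoint_left]) measurableSet_Ici, Set.Iio_union_Ici]
    exact measure_univ
  have h2 : (2 : ℝ≥0∞) * μ (Set.Ici 0) = 1 := by
    rw [two_mul]
    nth_rewrite 1 [hIci, hIoi]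
    exact huniv
  have := congrArg (fun y => (2:ℝ≥0∞)⁻¹ * y) h2
  simp only [← mul_assoc, ENNReal.inv_mul_cancel (two_ne_zero) (ENNReal.ofNat_ne_top),
    one_mul, mul_one] at this
  exact this

lemma gauss_Ico_le (v : ℝ≥0) (hv : v ≠ 0) (a : ℝ) :
    gaussianReal 0 v (Set.Ico a 0)
      ≤ ENNReal.ofReal ((√(2*π*v))⁻¹) * ENNReal.ofReal (0 - a) := by
  rw [gaussianReal_apply _ hv]
  calc ∫⁻ x in Set.Ico a 0, gaussianPDF 0 v x
      ≤ ∫⁻ _ in Set.Ico a 0, ENNReal.ofReal ((√(2*π*v))⁻¹) := by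
        refine setLIntegral_mono measurable_const fun x _ => ?_
        exact ENNReal.ofReal_le_ofReal (gaussianPDFReal_le_sup v 0 x)
    _ = ENNReal.ofReal ((√(2*π*v))⁻¹) * ENNReal.ofReal (0 - a) := by
        rw [setLIntegral_const, Real.volume_Ico]

lemma gauss_tail_half (N : ℕ) (hN : 1 ≤ N) (u s : ℝ) (hu : 0 ≤ u) (hs : -(u * √N) ≤ s) :
    gaussianReal 0 (N : ℝ≥0) (Set.Ici s) ≤ ENNReal.ofReal (1/2 + u / √(2*π)) := by
  have hv : (N : ℝ≥0) ≠ 0 := by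
    simpa using Nat.one_le_iff_ne_zero.mp hN
  have hNpos : (0:ℝ) < N := by exact_mod_cast hN
  have hsub : Set.Ici s ⊆ Set.Ico (-(u*√N)) 0 ∪ Set.Ici 0 := by
    intro x hx
    by_cases hx0 : x < 0
    · exact Or.inl ⟨le_trans hs hx, hx0⟩
    · exact Or.inr (not_lt.mp hx0)
  calc gaussianReal 0 (N:ℝ≥0) (Set.Ici s)
      ≤ gaussianReal 0 (N:ℝ≥0) (Set.Ico (-(u*√N)) 0) + gaussianReal 0 (N:ℝ≥0) (Set.Ici 0) :=
        le_trans (measure_mono hsub) (measure_union_le _ _)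
    _ ≤ ENNReal.ofReal ((√(2*π*(N:ℝ≥0)))⁻¹) * ENNReal.ofReal (0 - -(u*√N)) + 2⁻¹ := by
        gcongr
        · exact gauss_Ico_le _ hv _
        · exact le_of_eq (gauss_Ici_half _ hv)
    _ = ENNReal.ofReal (u / √(2*π)) + ENNReal.ofReal (1/2) := by
        congr 1
        · rw [← ENNReal.ofReal_mul (by positivity)]
          congr 1
          have hcoe : ((N:ℝ≥0):ℝ) = (N:ℝ) := rfl
          rw [hcoe, show (2*π*(N:ℝ)) = (2*π)*(N:ℝ) by ring, Real.sqrt_mul (by positivity),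
            mul_inv]
          have hsN : √(N:ℝ) ≠ 0 := by positivity
          field_simp
          ring
        · rw [one_div, ENNReal.ofReal_inv_of_pos two_pos, ENNReal.ofReal_ofNat]
    _ = ENNReal.ofReal (1/2 + u / √(2*π)) := by
        rw [← ENNReal.ofReal_add (by positivity) (by norm_num), add_comm]

lemma gauss_abs_tail (t : ℝ) (ht : 0 ≤ t) :
    gaussianReal 0 1 {x | t < |x|} ≤ ENNReal.ofReal (4 * rexp (-t^2/4)) := by
  rw [gaussianReal_apply _ one_ne_zero]
  have hpt : ∀ x ∈ {x : ℝ | t < |x|}, gaussianPDF 0 1 x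
      ≤ ENNReal.ofReal (rexp (-t^2/4) * rexp (-(4⁻¹) * x^2)) := by
    intro x hx
    refine ENNReal.ofReal_le_ofReal ?_
    have hx2 : t^2 ≤ x^2 := by
      rw [← sq_abs x]
      exact pow_le_pow_left₀ ht (le_of_lt hx) 2
    have h1 : gaussianPDFReal 0 1 x ≤ rexp (-(x^2)/2) := by
      rw [gaussianPDFReal]
      simp only [sub_zero, NNReal.coe_one, mul_one]
      refine mul_le_of_le_one_left (Real.exp_nonneg _) ?_
      rw [inv_le_one_iff₀]
      right
      rw [show (1:ℝ) = √1 by simp]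
      exact Real.sqrt_le_sqrt (by nlinarith [Real.pi_gt_three])
    refine le_trans h1 ?_
    rw [← Real.exp_add]
    apply Real.exp_le_exp.mpr
    nlinarith
  calc ∫⁻ x in {x : ℝ | t < |x|}, gaussianPDF 0 1 x
      ≤ ∫⁻ x in {x : ℝ | t < |x|}, ENNReal.ofReal (rexp (-t^2/4) * rexp (-(4⁻¹) * x^2)) :=
        setLIntegral_mono (by measurability) hpt
    _ ≤ ∫⁻ x, ENNReal.ofReal (rexp (-t^2/4) * rexp (-(4⁻¹) * x^2)) :=
        setLIntegral_le_lintegral _ _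
    _ = ENNReal.ofReal (∫ x, rexp (-t^2/4) * rexp (-(4⁻¹) * x^2)) := by
        rw [ofReal_integral_eq_lintegral_ofReal]
        · exact (integrable_exp_neg_mul_sq (by norm_num : (0:ℝ) < 4⁻¹)).const_mul _
        · exact Eventually.of_forall fun x => by positivity
    _ ≤ ENNReal.ofReal (4 * rexp (-t^2/4)) := by
        refine ENNReal.ofReal_le_ofReal ?_
        rw [integral_const_mul, integral_gaussian]
        rw [mul_comm]
        refine mul_le_mul_of_nonneg_right ?_ (Real.exp_nonneg _)
        calc √(π/4⁻¹) ≤ √(4^2) := Real.sqrt_le_sqrt (by rw [show (π/4⁻¹ : ℝ) = 4*π by ring]; nlinarith [Real.pi_le_four])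
          _ = 4 := by rw [Real.sqrt_sq]; norm_num

/-- Step A : some constraint is nearly tight at `τ`. -/
lemma exists_tight {κ : ℝ} {N Mn kk : ℕ} (hN : 1 ≤ N) (hk : 1 ≤ kk) {t : ℝ} (ht : 0 ≤ t)
    {g : Fin Mn → Fin N → ℝ} (hg : ∀ a i, |g a i| ≤ t)
    {σ τ : Fin N → ℝ} (hσ : σ ∈ isoSet g κ kk) (hτ : τ ∈ hammingBall kk σ) :
    ∃ a : Fin Mn, ∑ i, g a i * τ i < κ * Real.sqrt N + 2 * t := by
  have hσcube : σ ∈ cube N := hσ.1.1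
  by_cases hts : τ = σ
  · subst hts
    set j : Fin N := ⟨0, hN⟩ with hj
    set σ' : Fin N → ℝ := Function.update τ j (-(τ j)) with hσ'
    have hσ'cube : σ' ∈ cube N := by
      intro i
      by_cases hij : i = j
      · subst hij
        rw [hσ', Function.update_self]
        rcases hσcube j with h | h <;> rw [h] <;> norm_num
      · rw [hσ', Function.update_of_ne hij]
        exact hσcube i
    have habsj : |τ j| = 1 := by rcases hσcube j with h | h <;> rw [h] <;> norm_num
    have hσ'ball : σ' ∈ hammingBall kk τ := by
      refine ⟨hσ'cube, ?_⟩
      have hsum : ∑ i, |τ i - σ' i| = 2 := by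
        rw [Finset.sum_eq_single j]
        · rw [hσ', Function.update_self, sub_neg_eq_add, ← two_mul, abs_mul]
          rw [habsj]
          norm_num
        · intro i _ hij
          rw [hσ', Function.update_of_ne hij, sub_self, abs_zero]
        · intro h
          exact absurd (Finset.mem_univ j) h
      rw [dH, hsum]
      have : (1:ℝ) ≤ kk := by exact_mod_cast hk
      linarith
    have hσ'ne : σ' ≠ τ := by
      intro h
      have := congrFun h j
      rw [hσ', Function.update_self] at this
      rcases hσcube j with hh | hh <;> rw [hh] at this <;> norm_num at this
    have hσ'notsol : σ' ∉ solSet g κ := by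
      intro h
      have : σ' ∈ solSet g κ ∩ hammingBall kk τ := ⟨h, hσ'ball⟩
      rw [hσ.2] at this
      exact hσ'ne this
    have : ∃ a : Fin Mn, ∑ i, g a i * σ' i < κ * Real.sqrt N := by
      by_contra hcon
      push_neg at hcon
      exact hσ'notsol ⟨hσ'cube, hcon⟩
    obtain ⟨a, ha⟩ := this
    refine ⟨a, ?_⟩
    have hdiff : ∑ i, g a i * τ i = (∑ i, g a i * σ' i) + 2 * (g a j * τ j) := by
      rw [← sub_eq_iff_eq_add']
      rw [← Finset.sum_sub_distrib]
      rw [Finset.sum_eq_single j]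
      · rw [hσ', Function.update_self]; ring
      · intro i _ hij
        rw [hσ', Function.update_of_ne hij, sub_self]
      · intro h
        exact absurd (Finset.mem_univ j) h
    have hbd : g a j * τ j ≤ t := by
      calc g a j * τ j ≤ |g a j * τ j| := le_abs_self _
        _ = |g a j| * |τ j| := abs_mul _ _
        _ = |g a j| := by rw [habsj, mul_one]
        _ ≤ t := hg a j
    rw [hdiff]
    linarith
  · have hτnotsol : τ ∉ solSet g κ := by
      intro h
      have : τ ∈ solSet g κ ∩ hammingBall kk σ := ⟨h, hτ⟩
      rw [hσ.2] at this
      exact hts this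
    have : ∃ a : Fin Mn, ∑ i, g a i * τ i < κ * Real.sqrt N := by
      by_contra hcon
      push_neg at hcon
      exact hτnotsol ⟨hτ.1, hcon⟩
    obtain ⟨a, ha⟩ := this
    exact ⟨a, by linarith⟩



lemma core (κ : ℝ) (N Mn kk : ℕ) (hN : 1 ≤ N) (hk : 1 ≤ kk)
    (η t u : ℝ) (hη : η ∈ Set.Ioo (0:ℝ) 1) (ht : 0 ≤ t) (hu : 0 ≤ u)
    (hbound : |κ| * (Real.sqrt η * Real.sqrt N) + 2*t/Real.sqrt η ≤ u * Real.sqrt N)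
    (g : Fin Mn → Fin N → ℝ) (hg : ∀ a i, |g a i| ≤ t)
    (σ τ : Fin N → ℝ) (hσ : σ ∈ isoSet g κ kk) (hτ : τ ∈ hammingBall kk σ) :
    gaussMat N Mn {g' | τ ∈ solSet (tilde η g g') κ}
      ≤ ENNReal.ofReal (1/2 + u / Real.sqrt (2*π)) := by
  obtain ⟨hη0, hη1⟩ := hη
  obtain ⟨a, ha⟩ := exists_tight hN hk ht hg hσ hτ
  have hτcube : τ ∈ cube N := hτ.1
  have hsqη : 0 < √η := Real.sqrt_pos.mpr hη0
  have hsq1η0 : 0 ≤ √(1-η) := Real.sqrt_nonneg _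
  have hsq1η1 : √(1-η) ≤ 1 := by
    calc √(1-η) ≤ √1 := Real.sqrt_le_sqrt (by linarith)
      _ = 1 := Real.sqrt_one
  set S := ∑ i, g a i * τ i with hS
  set s := (κ * √N - √(1-η) * S) / √η with hs
  -- Step B: subset
  have hsubset : {g' : Fin Mn → Fin N → ℝ | τ ∈ solSet (tilde η g g') κ}
      ⊆ {g' | s ≤ ∑ i, τ i * g' a i} := by
    intro g' hg'
    have hcons := hg'.2 a
    have hexp : ∑ i, tilde η g g' a i * τ i
        = √(1-η) * S + √η * ∑ i, τ i * g' a i := by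
      rw [hS, Finset.mul_sum, Finset.mul_sum, ← Finset.sum_add_distrib]
      refine Finset.sum_congr rfl fun i _ => ?_
      simp only [tilde]
      ring
    rw [hexp] at hcons
    simp only [Set.mem_setOf_eq, hs]
    rw [div_le_iff₀ hsqη]
    linarith [hcons]
  -- lower bound on s
  have hslb : -(u * √N) ≤ s := by
    rw [hs, le_div_iff₀ hsqη]
    have hA : √(1-η) * S ≤ √(1-η) * (κ * √N + 2*t) :=
      mul_le_mul_of_nonneg_left (le_of_lt ha) hsq1η0
    have h1a : 1 - √(1-η) ≤ η := by
      have hw := Real.sq_sqrt (show (0:ℝ) ≤ 1-η by linarith)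
      nlinarith [Real.sqrt_nonneg (1-η)]
    have h1b : 0 ≤ 1 - √(1-η) := by linarith
    have hsN : 0 ≤ √(N:ℝ) := Real.sqrt_nonneg _
    have hκ : -|κ| ≤ κ := neg_abs_le κ
    have e1 : 0 ≤ (κ + |κ|) * ((1 - √(1-η)) * √(N:ℝ)) :=
      mul_nonneg (by linarith [abs_nonneg κ]) (mul_nonneg h1b hsN)
    have e2 : 0 ≤ |κ| * (√(N:ℝ) * (η - (1 - √(1-η)))) :=
      mul_nonneg (abs_nonneg κ) (mul_nonneg hsN (by linarith))
    have h4 : -(|κ| * η * √(N:ℝ)) ≤ κ * √(N:ℝ) * (1 - √(1-η)) := by nlinarith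
    have h3 : |κ| * η * √(N:ℝ) + 2*t ≤ u * √(N:ℝ) * √η := by
      have := mul_le_mul_of_nonneg_right hbound (le_of_lt hsqη)
      rw [add_mul, div_mul_cancel₀ _ (ne_of_gt hsqη)] at this
      have hmm : |κ| * (√η * √(N:ℝ)) * √η = |κ| * η * √(N:ℝ) := by
        rw [show |κ| * (√η * √(N:ℝ)) * √η = |κ| * (√η * √η) * √(N:ℝ) by ring,
          Real.mul_self_sqrt (le_of_lt hη0)]
      rw [hmm] at this
      linarith
    have h5 : 2*t*√(1-η) ≤ 2*t := by nlinarith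
    nlinarith [hA]
  -- pushforward chain
  have hmeasset : MeasurableSet {x : Fin N → ℝ | s ≤ ∑ i, τ i * x i} := by
    apply measurableSet_le measurable_const
    exact Finset.measurable_sum _ fun i _ => (measurable_pi_apply i).const_mul _
  have hmeasflip : Measurable (fun x : Fin N → ℝ => fun i => τ i * x i) :=
    by fun_prop
  have hmeassum : Measurable (fun x : Fin N → ℝ => ∑ i, x i) :=
    Finset.measurable_sum _ fun i _ => measurable_pi_apply i
  have hchain : gaussMat N Mn {g' | s ≤ ∑ i, τ i * g' a i}
      = gaussianReal 0 (N : ℝ≥0) (Set.Ici s) := by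
    have h1 : {g' : Fin Mn → Fin N → ℝ | s ≤ ∑ i, τ i * g' a i}
        = (fun g' : Fin Mn → Fin N → ℝ => g' a) ⁻¹' {x : Fin N → ℝ | s ≤ ∑ i, τ i * x i} := rfl
    rw [h1, show gaussMat N Mn = Measure.pi fun _ => Measure.pi fun _ => gaussianReal 0 1 from rfl,
      ← Measure.map_apply (measurable_pi_apply a) hmeasset, map_eval_pi']
    have h2 : {x : Fin N → ℝ | s ≤ ∑ i, τ i * x i}
        = (fun x : Fin N → ℝ => fun i => τ i * x i) ⁻¹' {x : Fin N → ℝ | s ≤ ∑ i, x i} := rfl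
    rw [h2, ← Measure.map_apply hmeasflip
      (measurableSet_le measurable_const (Finset.measurable_sum _ fun i _ => measurable_pi_apply i)),
      pi_map_flip N τ hτcube]
    have h3 : {x : Fin N → ℝ | s ≤ ∑ i, x i} = (fun x : Fin N → ℝ => ∑ i, x i) ⁻¹' Set.Ici s := rfl
    rw [h3, ← Measure.map_apply hmeassum measurableSet_Ici, map_sum_pi N hN]
  calc gaussMat N Mn {g' | τ ∈ solSet (tilde η g g') κ}
      ≤ gaussMat N Mn {g' | s ≤ ∑ i, τ i * g' a i} := measure_mono hsubset
    _ = gaussianReal 0 (N : ℝ≥0) (Set.Ici s) := hchain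
    _ ≤ ENNReal.ofReal (1/2 + u / √(2*π)) := gauss_tail_half N hN u s hu hslb

lemma bad_bound (N Mn : ℕ) (t : ℝ) (ht : 0 ≤ t) :
    gaussMat N Mn {g | ∃ a, ∃ i, t < |g a i|}
      ≤ (Mn * N : ℕ) * ENNReal.ofReal (4 * rexp (-t^2/4)) := by
  have habs : MeasurableSet {x : ℝ | t < |x|} := measurableSet_lt measurable_const measurable_abs
  have hset : {g : Fin Mn → Fin N → ℝ | ∃ a, ∃ i, t < |g a i|}
      = ⋃ a, ⋃ i, {g : Fin Mn → Fin N → ℝ | t < |g a i|} := by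
    ext g; simp
  rw [hset]
  have hsingle : ∀ (a : Fin Mn) (i : Fin N),
      gaussMat N Mn {g : Fin Mn → Fin N → ℝ | t < |g a i|}
        ≤ ENNReal.ofReal (4 * rexp (-t^2/4)) := by
    intro a i
    have h1 : {g : Fin Mn → Fin N → ℝ | t < |g a i|}
        = (fun g : Fin Mn → Fin N → ℝ => g a i) ⁻¹' {x : ℝ | t < |x|} := rfl
    have hm1 : Measurable (fun g : Fin Mn → Fin N → ℝ => g a) := measurable_pi_apply a
    have hm2 : Measurable (fun x : Fin N → ℝ => x i) := measurable_pi_apply i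
    have h2 : gaussMat N Mn {g : Fin Mn → Fin N → ℝ | t < |g a i|}
        = gaussianReal 0 1 {x : ℝ | t < |x|} := by
      rw [h1, show (fun g : Fin Mn → Fin N → ℝ => g a i)
          = (fun x : Fin N → ℝ => x i) ∘ (fun g : Fin Mn → Fin N → ℝ => g a) from rfl,
        Set.preimage_comp, ← Measure.map_apply hm1 (hm2 habs),
        show gaussMat N Mn = Measure.pi fun _ => Measure.pi fun _ => gaussianReal 0 1 from rfl,
        map_eval_pi', ← Measure.map_apply hm2 habs, map_eval_pi']
    rw [h2]
    exact gauss_abs_tail t ht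
  calc gaussMat N Mn (⋃ a, ⋃ i, {g : Fin Mn → Fin N → ℝ | t < |g a i|})
      ≤ ∑ a : Fin Mn, gaussMat N Mn (⋃ i, {g : Fin Mn → Fin N → ℝ | t < |g a i|}) :=
        measure_iUnion_fintype_le _ _
    _ ≤ ∑ _a : Fin Mn, ∑ _i : Fin N, ENNReal.ofReal (4 * rexp (-t^2/4)) := by
        refine Finset.sum_le_sum fun a _ => ?_
        exact le_trans (measure_iUnion_fintype_le _ _) (Finset.sum_le_sum fun i _ => hsingle a i)
    _ = (Mn * N : ℕ) * ENNReal.ofReal (4 * rexp (-t^2/4)) := by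
        simp [Finset.sum_const, mul_assoc]


/-- **Fragility of isolated solutions under perturbation.**
With `M_N/N → α > 0`, noise levels `η_N → 0` with `η_N·N/log N → ∞`, disorder `G` with
i.i.d. standard Gaussian entries and `G̃ = √(1-η_N)·G + √(η_N)·G'` for an independent
copy `G'`: for every `ε > 0`, with probability tending to `1` over `G`, every
`k_N`-isolated solution `σ ∈ S_{k_N}°(G,κ)` and every `τ` in the Hamming ball
`B_{k_N,H}(σ)` satisfy `P[τ ∈ S(G̃,κ) | G] ≤ 1/2 + ε` (the conditional probability
being the probability over the fresh randomness `G'` alone, with `G` held fixed). -/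
theorem fragility_of_isolated_solutions
    (κ α : ℝ) (hα : 0 < α)
    (M : ℕ → ℕ) (hM : Tendsto (fun N => (M N : ℝ) / N) atTop (nhds α))
    (k : ℕ → ℕ) (hk : ∀ N, 1 ≤ k N)
    (η : ℕ → ℝ) (hη01 : ∀ N, η N ∈ Set.Ioo (0 : ℝ) 1)
    (hη0 : Tendsto η atTop (nhds 0))
    (hηlog : Tendsto (fun N => η N * N / Real.log N) atTop atTop)
    (ε : ℝ) (hε : 0 < ε) :
    Tendsto (fun N =>
        gaussMat N (M N)
          {g | ∀ σ ∈ isoSet g κ (k N), ∀ τ ∈ hammingBall (k N) σ,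
            gaussMat N (M N) {g' | τ ∈ solSet (tilde (η N) g g') κ}
              ≤ ENNReal.ofReal (1 / 2 + ε)})
      atTop (nhds 1) := by
  have hπ : (0:ℝ) < √(2*π) := Real.sqrt_pos.mpr (by positivity)
  set c : ℝ := ε * √(2*π) / 4 with hc
  have hcpos : 0 < c := by positivity
  set t : ℕ → ℝ := fun N => c * √(η N * N) with htdef
  have htnonneg : ∀ N, 0 ≤ t N := fun N => by positivity
  -- the good event
  set E : (N : ℕ) → Set (Fin (M N) → Fin N → ℝ) :=
    fun N => {g | ∀ a i, |g a i| ≤ t N} with hEdef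
  have hEcompl : ∀ N, E N = {g : Fin (M N) → Fin N → ℝ | ∃ a, ∃ i, t N < |g a i|}ᶜ := by
    intro N
    ext g
    simp [hEdef, not_lt]
  have hbadmeas : ∀ N, MeasurableSet {g : Fin (M N) → Fin N → ℝ | ∃ a, ∃ i, t N < |g a i|} := by
    intro N
    have : {g : Fin (M N) → Fin N → ℝ | ∃ a, ∃ i, t N < |g a i|}
        = ⋃ a, ⋃ i, (fun g : Fin (M N) → Fin N → ℝ => g a i) ⁻¹' {x : ℝ | t N < |x|} := by
      ext g; simp
    rw [this]
    refine MeasurableSet.iUnion fun a => MeasurableSet.iUnion fun i => ?_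
    exact ((measurable_pi_apply i).comp (measurable_pi_apply a))
      (measurableSet_lt measurable_const measurable_abs)
  -- the bad probability tends to 0
  have hr0 : Tendsto (fun N => ((M N * N : ℕ) : ℝ) * (4 * rexp (-(t N)^2/4))) atTop (nhds 0) := by
    refine squeeze_zero' (Eventually.of_forall fun N => by positivity) ?_
      (tendsto_const_div_atTop_nhds_zero_nat (4*(α+1)))
    have hMN : ∀ᶠ N : ℕ in atTop, (M N : ℝ) ≤ (α+1) * N := by
      have h1 : ∀ᶠ N : ℕ in atTop, (M N : ℝ)/N ≤ α + 1 :=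
        hM.eventually (eventually_le_nhds (lt_add_one α))
      filter_upwards [h1, eventually_ge_atTop 1] with N hN1 hN2
      have hNpos : (0:ℝ) < N := by exact_mod_cast hN2
      calc (M N : ℝ) = ((M N : ℝ)/N) * N := by field_simp
        _ ≤ (α+1) * N := mul_le_mul_of_nonneg_right hN1 (le_of_lt hNpos)
    have hexp : ∀ᶠ N : ℕ in atTop, rexp (-(t N)^2/4) ≤ (((N:ℝ))^3)⁻¹ := by
      filter_upwards [hηlog.eventually_ge_atTop (12 / c^2), eventually_ge_atTop 2]
        with N hlogb hN2
      have hN1 : (1:ℝ) < N := by exact_mod_cast hN2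
      have hlogpos : 0 < Real.log N := Real.log_pos hN1
      have hprod : (12 / c^2) * Real.log N ≤ η N * N :=
        (le_div_iff₀ hlogpos).mp hlogb
      have ht2 : (t N)^2 = c^2 * (η N * N) := by
        rw [htdef]
        rw [mul_pow, Real.sq_sqrt (mul_nonneg (le_of_lt (hη01 N).1) (Nat.cast_nonneg N))]
      have hle : 3 * Real.log N ≤ (t N)^2/4 := by
        rw [ht2]
        have h12 : c^2 * ((12 / c^2) * Real.log N) ≤ c^2 * (η N * N) :=
          mul_le_mul_of_nonneg_left hprod (sq_nonneg c)
        rw [show c^2 * ((12 / c^2) * Real.log N) = 12 * Real.log N by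
          field_simp] at h12
        linarith
      calc rexp (-(t N)^2/4) ≤ rexp (-(3 * Real.log N)) := by
            apply Real.exp_le_exp.mpr
            rw [neg_div]
            linarith
        _ = (((N:ℝ))^3)⁻¹ := by
            rw [show -(3 * Real.log (N:ℝ)) = Real.log ((((N:ℝ))^3)⁻¹) by
              rw [Real.log_inv, Real.log_pow]; push_cast; ring,
              Real.exp_log (by positivity)]
    filter_upwards [hMN, hexp, eventually_ge_atTop 1] with N h1 h2 h3
    have hNpos : (0:ℝ) < N := by exact_mod_cast h3
    have e0 : 0 ≤ rexp (-(t N)^2/4) := Real.exp_nonneg _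
    calc ((M N * N : ℕ) : ℝ) * (4 * rexp (-(t N)^2/4))
        = ((M N : ℝ) * (N:ℝ)) * (4 * rexp (-(t N)^2/4)) := by push_cast; ring
      _ ≤ (((α+1) * N) * (N:ℝ)) * (4 * (((N:ℝ))^3)⁻¹) := by
          have hα1 : (0:ℝ) ≤ (α+1) * N := by positivity
          gcongr
      _ = 4*(α+1)/(N:ℝ) := by field_simp
  have hbad0 : Tendsto (fun N => gaussMat N (M N)
      {g : Fin (M N) → Fin N → ℝ | ∃ a, ∃ i, t N < |g a i|}) atTop (nhds 0) := by
    have hub : ∀ N, gaussMat N (M N) {g : Fin (M N) → Fin N → ℝ | ∃ a, ∃ i, t N < |g a i|}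
        ≤ ENNReal.ofReal (((M N * N : ℕ) : ℝ) * (4 * rexp (-(t N)^2/4))) := by
      intro N
      refine le_trans (bad_bound N (M N) (t N) (htnonneg N)) (le_of_eq ?_)
      rw [← ENNReal.ofReal_natCast, ← ENNReal.ofReal_mul (Nat.cast_nonneg _)]
    have hof : Tendsto (fun N => ENNReal.ofReal (((M N * N : ℕ) : ℝ) * (4 * rexp (-(t N)^2/4))))
        atTop (nhds 0) := by
      simpa using ENNReal.tendsto_ofReal hr0
    exact tendsto_of_tendsto_of_tendsto_of_le_of_le tendsto_const_nhds hof
      (fun N => zero_le) hub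
  have hlow : Tendsto (fun N => gaussMat N (M N) (E N)) atTop (nhds 1) := by
    have heq : (fun N => gaussMat N (M N) (E N))
        = fun N => 1 - gaussMat N (M N)
            {g : Fin (M N) → Fin N → ℝ | ∃ a, ∃ i, t N < |g a i|} := by
      funext N
      rw [hEcompl N, prob_compl_eq_one_sub (hbadmeas N)]
    rw [heq]
    have := ENNReal.Tendsto.sub (tendsto_const_nhds : Tendsto (fun _ : ℕ => (1:ℝ≥0∞)) atTop (nhds 1))
      hbad0 (Or.inl ENNReal.one_ne_top)
    simpa using this
  -- E N is eventually contained in the target event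
  have hκev : ∀ᶠ N : ℕ in atTop, |κ| * √(η N) ≤ ε * √(2*π)/2 := by
    have hsq : Tendsto (fun N => √(η N)) atTop (nhds 0) := by
      have := (Real.continuous_sqrt.tendsto 0).comp hη0
      simpa [Function.comp_def] using this
    have habs : Tendsto (fun N => |κ| * √(η N)) atTop (nhds 0) := by
      simpa using hsq.const_mul |κ|
    exact habs.eventually (eventually_le_nhds (by positivity))
  have hevlow : ∀ᶠ N : ℕ in atTop, gaussMat N (M N) (E N)
      ≤ gaussMat N (M N)
        {g | ∀ σ ∈ isoSet g κ (k N), ∀ τ ∈ hammingBall (k N) σ,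
          gaussMat N (M N) {g' | τ ∈ solSet (tilde (η N) g g') κ}
            ≤ ENNReal.ofReal (1 / 2 + ε)} := by
    filter_upwards [eventually_ge_atTop 1, hκev] with N hN1 hκb
    refine measure_mono ?_
    intro g hg σ hσ τ hτ
    have hbound : |κ| * (√(η N) * √(N:ℝ)) + 2*(t N)/√(η N) ≤ (ε * √(2*π)) * √(N:ℝ) := by
      have hηpos := (hη01 N).1
      have hsqη : 0 < √(η N) := Real.sqrt_pos.mpr hηpos
      have h2t : 2 * t N / √(η N) = (ε*√(2*π)/2) * √(N:ℝ) := by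
        rw [htdef]
        simp only
        rw [Real.sqrt_mul (le_of_lt hηpos)]
        rw [hc]
        field_simp
        ring
      have hmul := mul_le_mul_of_nonneg_right hκb (Real.sqrt_nonneg (N:ℝ))
      rw [h2t]
      nlinarith [Real.sqrt_nonneg (N:ℝ)]
    have hcore := core κ N (M N) (k N) hN1 (hk N) (η N) (t N) (ε * √(2*π))
      (hη01 N) (htnonneg N) (by positivity) hbound g hg σ τ hσ hτ
    refine le_trans hcore (le_of_eq ?_)
    congr 1
    rw [mul_div_cancel_right₀ ε (ne_of_gt hπ)]
  exact tendsto_of_tendsto_of_tendsto_of_le_of_le' hlow tendsto_const_nhds hevlow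
    (Eventually.of_forall fun N => prob_le_one)

end
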